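/- arXiv:1510.00184 — 3 statements merged into one kernel-verified Lean document; each statement's English description precedes it below -/
import Mathlib

section
/- Let g : ℝ → ℝ be continuous, nonnegative, and not identically zero on any nonempty open interval of (0,∞), and let γ₁(h) = ∫_{τ=0}^{h} ∫_{t=0}^{h-τ} g(t) dt dτ. Then for every h > 0 and every δ ∈ (0, h], γ₁(h+δ) + γ₁(h-δ) > 2 γ₁(h). -/
open intervalIntegral Set

/-!
Substituting `s = h - τ` gives `γ₁ h = ∫₀ʰ G` with `G x = ∫₀ˣ g`. Since `g ≥ 0` vanishes on
no open subinterval of `(0, ∞)`, `G` is strictly increasing there; as `G = γ₁'`, the function `γ₁`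
is strictly convex on `[0, ∞)`, and the claim is its strict midpoint inequality at `h ± δ`.
-/

theorem strictMonoOn_integral_of_exists_pos {g : ℝ → ℝ} (hg : Continuous g) {a : ℝ}
    (hg0 : ∀ t, a < t → 0 ≤ g t)
    (hpos : ∀ x y : ℝ, a < x → x < y → ∃ t, x < t ∧ t < y ∧ 0 < g t) (c : ℝ) :
    StrictMonoOn (fun x => ∫ t in c..x, g t) (Ioi a) := by
  intro x hx y _ hxy
  obtain ⟨t, hxt, hty, hgt⟩ := hpos x y hx hxy
  have hxy_pos : 0 < ∫ t in x..y, g t :=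
    integral_pos hxy hg.continuousOn (fun s hs => hg0 s (lt_trans hx hs.1))
      ⟨t, ⟨hxt.le, hty.le⟩, hgt⟩
  rw [← integral_interval_sub_left (hg.intervalIntegrable c y) (hg.intervalIntegrable c x)]
    at hxy_pos
  exact sub_pos.1 hxy_pos

theorem strictConvexOn_integral_of_strictMonoOn {f : ℝ → ℝ} (hf : Continuous f) {D : Set ℝ}
    (hD : Convex ℝ D) (hmono : StrictMonoOn f (interior D)) (a : ℝ) :
    StrictConvexOn ℝ D (fun x => ∫ t in a..x, f t) := by
  refine StrictMonoOn.strictConvexOn_of_deriv hD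
    (continuous_primitive (fun _ _ => hf.intervalIntegrable _ _) a).continuousOn ?_
  rwa [funext (hf.deriv_integral f a)]

theorem StrictConvexOn.two_mul_lt_add {D : Set ℝ} {f : ℝ → ℝ} (hf : StrictConvexOn ℝ D f)
    {x δ : ℝ} (hl : x - δ ∈ D) (hr : x + δ ∈ D) (hδ : δ ≠ 0) :
    2 * f x < f (x + δ) + f (x - δ) := by
  have hne : x - δ ≠ x + δ := fun h => hδ (by linarith)
  have key := hf.2 hl hr hne (by norm_num : (0 : ℝ) < 1 / 2) (by norm_num : (0 : ℝ) < 1 / 2)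
    (by norm_num)
  have hmid : (1 / 2 : ℝ) * (x - δ) + 1 / 2 * (x + δ) = x := by ring
  simp only [smul_eq_mul, hmid] at key
  linarith

/-- For continuous nonnegative `g` that is not identically zero on any nonempty open
subinterval of `(0,∞)`, with `γ₁ h = ∫ τ in 0..h, ∫ t in 0..(h-τ), g t`, one has
`γ₁(h+δ) + γ₁(h-δ) > 2 γ₁(h)` for every `h > 0` and `δ ∈ (0, h]`. -/
theorem stmt_1 (g : ℝ → ℝ) (hg : Continuous g) (hg0 : ∀ t, 0 ≤ t → 0 ≤ g t)
    (hgne : ∀ a b : ℝ, 0 < a → a < b → ∃ t, a < t ∧ t < b ∧ 0 < g t)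
    (γ₁ : ℝ → ℝ)
    (hγ₁ : ∀ h : ℝ, γ₁ h = ∫ τ in (0:ℝ)..h, ∫ t in (0:ℝ)..(h - τ), g t) :
    ∀ h δ : ℝ, 0 < h → 0 < δ → δ ≤ h → 2 * γ₁ h < γ₁ (h + δ) + γ₁ (h - δ) := by
  intro h δ hh hδ hδh
  set G : ℝ → ℝ := fun x => ∫ t in (0:ℝ)..x, g t
  have hγ₁G : γ₁ = fun x => ∫ s in (0:ℝ)..x, G s := by
    funext x
    rw [hγ₁ x, integral_comp_sub_left (fun y => G y) x, sub_self, sub_zero]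
  have hGmono : StrictMonoOn G (interior (Ici 0)) := by
    rw [interior_Ici]
    exact strictMonoOn_integral_of_exists_pos hg (fun t ht => hg0 t ht.le) hgne 0
  have hconvex : StrictConvexOn ℝ (Ici 0) γ₁ := by
    rw [hγ₁G]
    exact strictConvexOn_integral_of_strictMonoOn
      (continuous_primitive (fun _ _ => hg.intervalIntegrable _ _) 0) (convex_Ici 0) hGmono 0
  exact hconvex.two_mul_lt_add (sub_nonneg.2 hδh) (by simp only [mem_Ici]; linarith) hδ.ne'
end

section
/- Let g : ℝ → ℝ be continuous and nonnegative with γ₁(h) = ∫₀^h ∫₀^{h-τ} g(t) dt dτ. For h > 0 and δ ∈ [0, h], the function δ ↦ γ₁(h+δ) + γ₁(h-δ) is monotone nondecreasing on [0,h]. -/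
open intervalIntegral MeasureTheory Set

/-! Substituting `u = x - τ` gives `γ₁ x = ∫₀^x G` with `G` the primitive of `g`. As `g ≥ 0`, `G` is
monotone, so `γ₁` is convex; and for any convex `f`, the sum `f (c + δ) + f (c - δ)` grows as the
two points `c ± δ` spread apart. -/

theorem ConvexOn.monotoneOn_add_comp_add_comp_sub {𝕜 : Type*} [Field 𝕜] [LinearOrder 𝕜]
    [IsStrictOrderedRing 𝕜] {f : 𝕜 → 𝕜} (hf : ConvexOn 𝕜 univ f) (c : 𝕜) :
    MonotoneOn (fun δ => f (c + δ) + f (c - δ)) (Ici 0) := by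
  intro δ₁ hδ₁ δ₂ _ hδ
  rcases (hδ₁.trans hδ).eq_or_lt with rfl | hδ₂
  · rw [le_antisymm hδ hδ₁]
  -- `c ± δ₁` are the convex combinations of `c ± δ₂` with the mirrored weights `w`, `1 - w`.
  set w := (δ₂ + δ₁) / (2 * δ₂) with hw
  have hw₀ : 0 ≤ w := by have : (0 : 𝕜) ≤ δ₁ := hδ₁; positivity
  have hw₁ : 0 ≤ 1 - w := by
    rw [hw, sub_nonneg, div_le_one (by positivity)]
    linarith
  have eplus : w • (c + δ₂) + (1 - w) • (c - δ₂) = c + δ₁ := by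
    rw [hw, smul_eq_mul, smul_eq_mul]; field_simp; ring
  have eminus : (1 - w) • (c + δ₂) + w • (c - δ₂) = c - δ₁ := by
    rw [hw, smul_eq_mul, smul_eq_mul]; field_simp; ring
  have hplus := hf.2 (mem_univ (c + δ₂)) (mem_univ (c - δ₂)) hw₀ hw₁ (add_sub_cancel w 1)
  have hminus := hf.2 (mem_univ (c + δ₂)) (mem_univ (c - δ₂)) hw₁ hw₀ (sub_add_cancel 1 w)
  rw [eplus, smul_eq_mul, smul_eq_mul] at hplus
  rw [eminus, smul_eq_mul, smul_eq_mul] at hminus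
  dsimp only
  linarith

theorem monotone_primitive_of_nonneg {g : ℝ → ℝ} (hg : ∀ a b, IntervalIntegrable g volume a b)
    (hg0 : ∀ t, 0 ≤ g t) (a : ℝ) : Monotone fun x => ∫ t in a..x, g t := by
  intro x y hxy
  have hdiff : (∫ t in a..y, g t) - ∫ t in a..x, g t = ∫ t in x..y, g t :=
    integral_interval_sub_left (hg a y) (hg a x)
  exact sub_nonneg.1 (hdiff ▸ integral_nonneg hxy fun t _ => hg0 t)

theorem convexOn_primitive_of_monotone {G : ℝ → ℝ} (hG : Continuous G) (hGm : Monotone G)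
    (a : ℝ) : ConvexOn ℝ univ fun x => ∫ u in a..x, G u := by
  have hderiv : deriv (fun x => ∫ u in a..x, G u) = G := funext (hG.deriv_integral G a)
  refine MonotoneOn.convexOn_of_deriv convex_univ ?_ ?_ ?_
  · exact (continuous_primitive (fun _ _ => hG.intervalIntegrable _ _) a).continuousOn
  · exact fun x _ =>
      (hG.integral_hasStrictDerivAt a x).hasDerivAt.differentiableAt.differentiableWithinAt
  · rw [hderiv]; exact hGm.monotoneOn _

theorem integral_integral_sub_eq (g : ℝ → ℝ) (x : ℝ) :
    ∫ τ in (0:ℝ)..x, ∫ t in (0:ℝ)..(x - τ), g t = ∫ u in (0:ℝ)..x, ∫ t in (0:ℝ)..u, g t := by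
  rw [integral_comp_sub_left (fun u => ∫ t in (0:ℝ)..u, g t) x, sub_self, sub_zero]

theorem stmt_3_general (g : ℝ → ℝ) (hg : Continuous g) (hg0 : ∀ t, 0 ≤ g t)
    (γ₁ : ℝ → ℝ)
    (hγ₁ : ∀ h : ℝ, γ₁ h = ∫ τ in (0:ℝ)..h, ∫ t in (0:ℝ)..(h - τ), g t)
    (h : ℝ) :
    MonotoneOn (fun δ : ℝ => γ₁ (h + δ) + γ₁ (h - δ)) (Set.Icc 0 h) := by
  have hγ : γ₁ = fun x => ∫ u in (0:ℝ)..x, ∫ t in (0:ℝ)..u, g t :=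
    funext fun x => (hγ₁ x).trans (integral_integral_sub_eq g x)
  have hconvex : ConvexOn ℝ univ γ₁ := hγ ▸ convexOn_primitive_of_monotone
    (continuous_primitive (fun a b => hg.intervalIntegrable a b) 0)
    (monotone_primitive_of_nonneg (fun a b => hg.intervalIntegrable a b) hg0 0) 0
  exact (hconvex.monotoneOn_add_comp_add_comp_sub h).mono Icc_subset_Ici_self

/-- With `γ₁ h = ∫ τ in 0..h, ∫ t in 0..(h-τ), g t` for continuous nonnegative `g`, for any
`h > 0` the function `δ ↦ γ₁(h+δ) + γ₁(h-δ)` is monotone nondecreasing on `[0, h]`. -/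
theorem stmt_3 (g : ℝ → ℝ) (hg : Continuous g) (hg0 : ∀ t, 0 ≤ g t)
    (γ₁ : ℝ → ℝ)
    (hγ₁ : ∀ h : ℝ, γ₁ h = ∫ τ in (0:ℝ)..h, ∫ t in (0:ℝ)..(h - τ), g t)
    (h : ℝ) (hh : 0 < h) :
    MonotoneOn (fun δ : ℝ => γ₁ (h + δ) + γ₁ (h - δ)) (Set.Icc 0 h) :=
  stmt_3_general g hg hg0 γ₁ hγ₁ h
end

section
/- Let γ₁ : ℝ≥0 → ℝ be defined from a continuous nonnegative g : ℝ → ℝ by γ₁(h) = ∫₀^h ∫₀^{h-τ} g(t) dt dτ. Then γ₁ is convex on [0,∞). Consequently, for any N ≥ 1 and h₀,…,h_{N-1} ≥ 0 with fixed mean h_av = (1/N)∑ h_j, the sum ∑_{j=0}^{N-1} γ₁(h_j) is minimized by h_j = h_av for all j. -/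
open intervalIntegral Set

/-- With `γ₁ h = ∫ τ in 0..h, ∫ t in 0..(h-τ), g t` for continuous nonnegative `g`, the
function `γ₁` is convex on `[0,∞)`; consequently, for `N ≥ 1` and nonnegative
`h₀,…,h_{N-1}` of fixed mean `h_av`, the sum `∑ γ₁(h_j)` is minimized by the uniform
choice `h_j = h_av`. -/
theorem stmt_16 (g : ℝ → ℝ) (hg : Continuous g) (hg0 : ∀ t, 0 ≤ g t)
    (γ₁ : ℝ → ℝ)
    (hγ₁ : ∀ h : ℝ, γ₁ h = ∫ τ in (0:ℝ)..h, ∫ t in (0:ℝ)..(h - τ), g t) :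
    ConvexOn ℝ (Set.Ici 0) γ₁ ∧
    ∀ N : ℕ, 1 ≤ N → ∀ hs : Fin N → ℝ, (∀ j, 0 ≤ hs j) →
      (N : ℝ) * γ₁ ((∑ j, hs j) / N) ≤ ∑ j, γ₁ (hs j) := by
  set G : ℝ → ℝ := fun x => ∫ t in (0:ℝ)..x, g t with hG
  have hGderiv : ∀ x : ℝ, HasDerivAt G (g x) x := fun x =>
    intervalIntegral.integral_hasDerivAt_right (hg.intervalIntegrable 0 x)
      (hg.stronglyMeasurableAtFilter _ _) hg.continuousAt
  have hGcont : Continuous G :=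
    continuous_iff_continuousAt.mpr fun x => (hGderiv x).continuousAt
  have hγG : ∀ h : ℝ, γ₁ h = ∫ s in (0:ℝ)..h, G s := by
    intro h
    rw [hγ₁ h]
    show (∫ τ in (0:ℝ)..h, G (h - τ)) = _
    rw [intervalIntegral.integral_comp_sub_left G h, sub_zero, sub_self]
  have hGmono : Monotone G := by
    intro x y hxy
    have hint : ∀ a b : ℝ, IntervalIntegrable g MeasureTheory.volume a b :=
      fun a b => hg.intervalIntegrable a b
    have : G y - G x = ∫ t in x..y, g t := by
      rw [hG]; simp only
      rw [intervalIntegral.integral_interval_sub_left (hint 0 y) (hint 0 x)]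
    have hnn : 0 ≤ ∫ t in x..y, g t :=
      intervalIntegral.integral_nonneg hxy (fun t _ => hg0 t)
    linarith
  have hderiv : ∀ x : ℝ, HasDerivAt γ₁ (G x) x := by
    intro x
    have : HasDerivAt (fun h => ∫ s in (0:ℝ)..h, G s) (G x) x :=
      intervalIntegral.integral_hasDerivAt_right (hGcont.intervalIntegrable 0 x)
        (hGcont.stronglyMeasurableAtFilter _ _) hGcont.continuousAt
    exact this.congr_of_eventuallyEq (Filter.Eventually.of_forall fun h => (hγG h))
  have hconv : ConvexOn ℝ (Set.Ici (0:ℝ)) γ₁ := by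
    have huniv : ConvexOn ℝ Set.univ γ₁ := by
      apply Monotone.convexOn_univ_of_deriv (fun x => (hderiv x).differentiableAt)
      intro x y hxy
      rw [(hderiv x).deriv, (hderiv y).deriv]
      exact hGmono hxy
    exact huniv.subset (Set.subset_univ _) (convex_Ici 0)
  refine ⟨hconv, ?_⟩
  intro N hN hs hs0
  have hNpos : (0:ℝ) < N := by exact_mod_cast hN
  have hjensen := hconv.map_sum_le (t := Finset.univ) (w := fun _ : Fin N => (N:ℝ)⁻¹)
    (p := hs) (fun i _ => by positivity) (by simp; field_simp)
    (fun i _ => hs0 i)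
  have hsum : (∑ i : Fin N, (N:ℝ)⁻¹ • hs i) = (∑ j, hs j) / N := by
    rw [← Finset.smul_sum]; simp [smul_eq_mul, div_eq_inv_mul]
  rw [hsum] at hjensen
  have : (N:ℝ) * γ₁ ((∑ j, hs j) / N) ≤ (N:ℝ) * ∑ i : Fin N, (N:ℝ)⁻¹ * γ₁ (hs i) :=
    mul_le_mul_of_nonneg_left hjensen hNpos.le
  calc (N:ℝ) * γ₁ ((∑ j, hs j) / N) ≤ (N:ℝ) * ∑ i : Fin N, (N:ℝ)⁻¹ * γ₁ (hs i) := this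
    _ = ∑ j, γ₁ (hs j) := by
        rw [Finset.mul_sum]
        simp [← mul_assoc, mul_inv_cancel₀ hNpos.ne']
end
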